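/- Let R be a finite-dimensional semisimple algebra over a field k, let M be a faithful R-module which is finite-dimensional over k, and let W ⊆ M be a k-subspace. Suppose there exist u ∈ R and a nonzero scalar r ∈ k with r·W ⊆ u·M ⊆ W. Then u·M = W, and there exists an idempotent e ∈ R with e·M = W; in particular M = W ⊕ (1−e)·M. -/
import Mathlib


/-- Let `R` be a finite-dimensional semisimple `k`-algebra acting faithfully on a
finite-dimensional `k`-vector space `M`, `W ⊆ M` a `k`-subspace, `u ∈ R` and
`r ∈ k` nonzero with `r·W ⊆ u·M ⊆ W`. Then `u·M = W` and there is an idempotent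
`e ∈ R` with `e·M = W`; in particular `M = W ⊕ (1-e)·M`. -/
theorem stmt14 {k R M : Type*} [Field k] [Ring R] [Algebra k R]
    [IsSemisimpleRing R] [FiniteDimensional k R]
    [AddCommGroup M] [Module k M] [Module R M] [IsScalarTower k R M]
    [FiniteDimensional k M] [FaithfulSMul R M]
    (W : Submodule k M) (u : R) (r : k) (hr : r ≠ 0)
    (h1 : ∀ w ∈ W, ∃ m : M, r • w = u • m)
    (h2 : ∀ m : M, u • m ∈ W) :
    (Set.range (fun m : M => u • m) = (W : Set M)) ∧
    ∃ e : R, IsIdempotentElem e ∧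
      Set.range (fun m : M => e • m) = (W : Set M) ∧
      (∀ m : M, ∃ w ∈ W, ∃ m' : M, m = w + (1 - e) • m') ∧
      (∀ w ∈ W, ∀ m' : M, w = (1 - e) • m' → w = 0) := by
  -- Step 1: `u • M = W`.
  have hrange : Set.range (fun m : M => u • m) = (W : Set M) := by
    apply Set.eq_of_subset_of_subset
    · rintro _ ⟨m, rfl⟩; exact h2 m
    · intro w hw
      obtain ⟨m, hm⟩ := h1 w hw
      refine ⟨r⁻¹ • m, ?_⟩
      show u • (r⁻¹ • m) = w
      have : u • (r⁻¹ • m) = r⁻¹ • (u • m) := by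
        rw [← algebraMap_smul R r⁻¹ m, ← mul_smul, ← Algebra.commutes, mul_smul,
          algebraMap_smul]
      rw [this, ← hm, smul_smul, inv_mul_cancel₀ hr, one_smul]
  refine ⟨hrange, ?_⟩
  -- Step 2: find an idempotent `f` generating the left ideal `Ru`.
  obtain ⟨f, hfidem, hfspan⟩ :=
    IsSemisimpleRing.ideal_eq_span_idempotent (Ideal.span {u})
  have hf_mem : f ∈ Ideal.span ({u} : Set R) := by
    rw [hfspan]; exact Ideal.subset_span rfl
  have hu_mem : u ∈ Ideal.span ({f} : Set R) := by
    rw [← hfspan]; exact Ideal.subset_span rfl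
  obtain ⟨a, ha⟩ := Ideal.mem_span_singleton'.mp hf_mem  -- a * u = f
  obtain ⟨c, hc⟩ := Ideal.mem_span_singleton'.mp hu_mem  -- c * f = u
  have huf : u * f = u := by
    rw [← hc, mul_assoc, hfidem.eq]
  -- Step 3: `e := u * a` is idempotent and `e • M = u • M = W`.
  set e := u * a with he
  have heidem : IsIdempotentElem e := by
    show e * e = e
    rw [he, mul_assoc u a (u * a), ← mul_assoc a u a, ha, ← mul_assoc, huf]
  have heu : e * u = u := by rw [he, mul_assoc, ha, huf]
  have herange : Set.range (fun m : M => e • m) = (W : Set M) := by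
    apply Set.eq_of_subset_of_subset
    · rintro _ ⟨m, rfl⟩
      show (u * a) • m ∈ W
      rw [mul_smul]; exact h2 _
    · intro w hw
      rw [← hrange] at hw
      obtain ⟨m, hm⟩ := hw
      refine ⟨u • m, ?_⟩
      show e • u • m = w
      rw [← mul_smul, heu]; exact hm
  refine ⟨e, heidem, herange, ?_, ?_⟩
  · intro m
    refine ⟨e • m, ?_, m, ?_⟩
    · have : e • m ∈ Set.range (fun m : M => e • m) := ⟨m, rfl⟩
      rw [herange] at this; exact this
    · rw [sub_smul, one_smul]; abel
  · intro w hw m' hm'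
    rw [← SetLike.mem_coe, ← herange] at hw
    obtain ⟨m, hm⟩ := hw
    have h1 : e • w = w := by rw [← hm, ← mul_smul, heidem.eq]
    have h2 : e • w = 0 := by
      rw [hm', ← mul_smul, mul_sub, mul_one, heidem.eq, sub_self, zero_smul]
    rw [← h1, h2]
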